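/- For every set A of natural numbers and every endomorphism φ : F → F (a map with φ(a * b) = φ(a) * φ(b) for all a, b ∈ F, φ(0) = 0, φ(p) = p), one has φ(S(A)) ⊆ S(A); in particular S(A) is closed under all substitutions of arbitrary elements of F for the generator letters. -/

import Mathlib

/-- Letters: `none` is the distinguished letter `p`, `some i` is the generator letter `xᵢ`. -/
abbrev Letter := Option ℕ

/-- The carrier of the free algebra: `0`, the letters, and the words
(pairs of a letter and a finite nonempty set of letters). -/
inductive F : Type
  | zero : F
  | letter : Letter → F
  | word : Letter → {Y : Finset Letter // Y.Nonempty} → F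

namespace F

/-- The binary operation `*` on `F`. -/
def mul : F → F → F
  | zero, _ => zero
  | _, zero => zero
  | _, word _ _ => zero
  | letter x, letter y => word x ⟨{y}, Finset.singleton_nonempty y⟩
  | word x Y, letter y =>
      if y ∈ Y.1 then zero
      else word x ⟨insert y Y.1, Finset.insert_nonempty y Y.1⟩

/-- The distinguished letter `p` as an element of `F`. -/
def p : F := letter none

/-- The generator letter `xᵢ` as an element of `F`. -/
def x (i : ℕ) : F := letter (some i)

end F

/-- For a set `A` of natural numbers, `S A` consists of `0` together with all words whose
first component is the letter `p` and whose length (`|Y| + 1`) lies in `A`. -/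
def S (A : Set ℕ) : Set F :=
  {f | f = F.zero ∨ ∃ Y : {Y : Finset Letter // Y.Nonempty},
    f = F.word none Y ∧ Y.1.card + 1 ∈ A}

/-!
A word `(p, Y)` is the product `((p * y₁) * y₂) * ⋯ * yₖ` of its letters, so a multiplicative
map sends it to `((p * φ y₁) * φ y₂) * ⋯ * φ yₖ`. Right multiplication of `p` or of a `p`-word
by anything either gives `0` or adds exactly one new letter, so by induction on `Y` this
product is `0` or a `p`-word of the same length.
-/

namespace F

/-- `n` is `|Y|`, one less than the length of the word `(p, Y)`. -/
def IsPWordOrZero (n : ℕ) (f : F) : Prop :=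
  f = zero ∨ ∃ Y : {Y : Finset Letter // Y.Nonempty}, f = word none Y ∧ Y.1.card = n

lemma eq_zero_of_mul_self_eq {a : F} (h : mul a a = a) : a = zero := by
  cases a <;> simp_all [mul]

lemma isPWordOrZero_p_mul (g : F) : IsPWordOrZero 1 (mul p g) := by
  cases g with
  | letter z => exact Or.inr ⟨⟨{z}, Finset.singleton_nonempty z⟩, rfl, Finset.card_singleton z⟩
  | zero | word => exact Or.inl rfl

lemma IsPWordOrZero.mul_right {n : ℕ} {f : F} (hf : IsPWordOrZero n f) (g : F) :
    IsPWordOrZero (n + 1) (mul f g) := by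
  obtain rfl | ⟨Y, rfl, rfl⟩ := hf
  · exact Or.inl rfl
  cases g with
  | letter z =>
    by_cases hz : z ∈ Y.1
    · exact Or.inl (if_pos hz)
    · exact Or.inr ⟨⟨insert z Y.1, Finset.insert_nonempty z Y.1⟩, if_neg hz,
        Finset.card_insert_of_notMem hz⟩
  | zero | word => exact Or.inl rfl

lemma word_singleton_eq_mul (x a : Letter) :
    word x ⟨{a}, Finset.singleton_nonempty a⟩ = mul (letter x) (letter a) :=
  rfl

lemma word_cons_eq_mul (x a : Letter) {Y : Finset Letter} (ha : a ∉ Y) (hY : Y.Nonempty) :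
    word x ⟨Finset.cons a Y ha, Finset.cons_nonempty ha⟩ = mul (word x ⟨Y, hY⟩) (letter a) := by
  simp only [mul, if_neg ha, Finset.cons_eq_insert]

section Endomorphism

variable {φ : F → F} (hmul : ∀ a b : F, φ (mul a b) = mul (φ a) (φ b))
include hmul

lemma map_zero_of_map_mul : φ zero = zero :=
  eq_zero_of_mul_self_eq (by rw [← hmul]; rfl)

lemma isPWordOrZero_map_word (hp : φ p = p) {Y : Finset Letter} (hY : Y.Nonempty) :
    IsPWordOrZero Y.card (φ (word none ⟨Y, hY⟩)) := by
  induction hY using Finset.Nonempty.cons_induction with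
  | singleton a =>
    rw [word_singleton_eq_mul, hmul]
    exact hp ▸ isPWordOrZero_p_mul (φ (letter a))
  | cons a Y ha hY ih =>
    rw [word_cons_eq_mul none a ha hY, hmul, Finset.card_cons]
    exact ih.mul_right _

end Endomorphism

end F

theorem stmt_7_general (A : Set ℕ) (φ : F → F)
    (hmul : ∀ a b : F, φ (F.mul a b) = F.mul (φ a) (φ b))
    (hp : φ F.p = F.p) :
    ∀ t ∈ S A, φ t ∈ S A := by
  rintro t (rfl | ⟨⟨Y, hY⟩, rfl, hA⟩)
  · exact Or.inl (F.map_zero_of_map_mul hmul)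
  · obtain h | ⟨Y', h, hcard⟩ := F.isPWordOrZero_map_word hmul hp hY
    · exact Or.inl h
    · exact Or.inr ⟨Y', h, hcard ▸ hA⟩

/-- For any `A ⊆ ℕ` and any endomorphism `φ` of `F`, `φ(S A) ⊆ S A`. -/
theorem stmt_7 (A : Set ℕ) (φ : F → F)
    (hmul : ∀ a b : F, φ (F.mul a b) = F.mul (φ a) (φ b))
    (hzero : φ F.zero = F.zero) (hp : φ F.p = F.p) :
    ∀ t ∈ S A, φ t ∈ S A :=
  stmt_7_general A φ hmul hp
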